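/- arXiv:2406.13826 — 3 statements merged into one kernel-verified Lean document; each statement's English description precedes it below -/
import Mathlib

section
/- In a directed acyclic graph G, if two vertices A and B are d-separated by a set C (every path between A and B is blocked by C), then in any graph G′ obtained from G by deleting a subset of the edges, A and B remain d-separated by C, provided that no vertex of C is a collider (or descendant of a collider) whose incoming edges into that collider were deleted along some path; in particular, if C contains no colliders on any path of G between A and B, then edge deletion preserves d-separation of A and B given C. -/
/-! d-separation in directed acyclic graphs, and preservation under edge deletion. -/

namespace DSepStmt8

variable {V : Type*}

/-- A (possibly trivial) undirected path in the directed graph with edge relation `E`: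
a list of pairwise distinct vertices, consecutive ones adjacent in either orientation,
starting at `A` and ending at `B`. -/
def IsPath (E : V → V → Prop) (A B : V) (p : List V) : Prop :=
  p.Nodup ∧ p.Chain' (fun a b => E a b ∨ E b a) ∧ p.head? = some A ∧ p.getLast? = some B

/-- `m` is a collider on path `p`: an interior vertex whose two adjacent path edges both
point into it. -/
def IsColliderOn (E : V → V → Prop) (p : List V) (m : V) : Prop :=
  ∃ (i : ℕ), ∃ a b, p[i]? = some a ∧ p[i + 1]? = some m ∧ p[i + 2]? = some b ∧
    E a m ∧ E b m

/-- The path `p` is blocked by the conditioning set `C`: some interior triple `(a, m, b)` of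
consecutive vertices is such that either `m` is a non-collider lying in `C`, or `m` is a
collider such that neither `m` nor any of its descendants lies in `C`. -/
def Blocked (E : V → V → Prop) (C : Set V) (p : List V) : Prop :=
  ∃ (i : ℕ), ∃ a m b, p[i]? = some a ∧ p[i + 1]? = some m ∧ p[i + 2]? = some b ∧
    ((¬(E a m ∧ E b m)) ∧ m ∈ C ∨
      (E a m ∧ E b m) ∧ ∀ x, Relation.ReflTransGen E m x → x ∉ C)

/-- `A` and `B` are d-separated given `C`: every path between `A` and `B` is blocked by `C`. -/
def DSep (E : V → V → Prop) (C : Set V) (A B : V) : Prop :=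
  ∀ p, IsPath E A B p → Blocked E C p

end DSepStmt8

/-!
Every path of the smaller graph `E'` is a path of `E`, hence blocked in `E` at some triple
`(a, m, b)`. A non-collider of `E` stays a non-collider of `E'`. At a collider of `E` the
path edges of `E'` cannot point away from `m`, since together with the `E`-edges into `m`
they would form a 2-cycle; so `m` is still a collider of `E'`, and its `E'`-descendants are
among its `E`-descendants, none of which lies in `C`.
-/

namespace DSepStmt8

variable {V : Type*} {E E' : V → V → Prop}

theorem _root_.List.IsChain.rel_of_getElem? {R : V → V → Prop} {p : List V} (h : p.IsChain R)
    {i : ℕ} {a b : V} (ha : p[i]? = some a) (hb : p[i + 1]? = some b) : R a b := by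
  obtain ⟨_, rfl⟩ := List.getElem?_eq_some_iff.mp ha
  obtain ⟨hi, rfl⟩ := List.getElem?_eq_some_iff.mp hb
  exact h.getElem i hi

theorem IsPath.mono (hsub : ∀ a b, E' a b → E a b) {A B : V} {p : List V}
    (hp : IsPath E' A B p) : IsPath E A B p :=
  ⟨hp.1, hp.2.1.imp fun a b h => h.imp (hsub a b) (hsub b a), hp.2.2⟩

theorem rel_of_adj_of_asymm (hasymm : ∀ a b, E a b → ¬E b a) (hsub : ∀ a b, E' a b → E a b)
    {a b : V} (hadj : E' a b ∨ E' b a) (hab : E a b) : E' a b :=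
  hadj.resolve_right fun hba => hasymm a b hab (hsub b a hba)

theorem Blocked.of_subrel (hasymm : ∀ a b, E a b → ¬E b a) (hsub : ∀ a b, E' a b → E a b)
    {C : Set V} {p : List V} (hchain : p.IsChain fun a b => E' a b ∨ E' b a)
    (hblocked : Blocked E C p) : Blocked E' C p := by
  obtain ⟨i, a, m, b, ha, hm, hb, hcase⟩ := hblocked
  refine ⟨i, a, m, b, ha, hm, hb, ?_⟩
  rcases hcase with ⟨hnoncollider, hmC⟩ | ⟨⟨ham, hbm⟩, hdesc⟩
  · exact Or.inl ⟨fun h => hnoncollider ⟨hsub _ _ h.1, hsub _ _ h.2⟩, hmC⟩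
  · have ham' : E' a m := rel_of_adj_of_asymm hasymm hsub (hchain.rel_of_getElem? ha hm) ham
    have hbm' : E' b m :=
      rel_of_adj_of_asymm hasymm hsub (hchain.rel_of_getElem? hm hb).symm hbm
    exact Or.inr ⟨⟨ham', hbm'⟩, fun x hx => hdesc x (Relation.ReflTransGen.mono hsub _ _ hx)⟩

theorem DSep.of_subrel (hasymm : ∀ a b, E a b → ¬E b a) (hsub : ∀ a b, E' a b → E a b)
    {C : Set V} {A B : V} (hdsep : DSep E C A B) : DSep E' C A B :=
  fun p hp => (hdsep p (hp.mono hsub)).of_subrel hasymm hsub hp.2.1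

end DSepStmt8

open DSepStmt8

theorem dsep_preserved_under_edge_deletion_general
    {V : Type*}
    (E E' : V → V → Prop)
    (hacyclic : ∀ v : V, ¬ Relation.TransGen E v v)
    (hsub : ∀ a b, E' a b → E a b)
    (A B : V) (C : Set V)
    (hdsep : DSep E C A B) :
    DSep E' C A B :=
  hdsep.of_subrel (fun a _ hab hba => hacyclic a (.tail (.single hab) hba)) hsub

/-- In a finite DAG, if `A` and `B` are d-separated by `C`, and `C` contains no
collider (nor descendant of a collider) of any path of `G` between `A` and `B`, then deleting
edges (passing to a subrelation `E'` of `E`) preserves d-separation of `A` and `B` given `C`. -/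
theorem dsep_preserved_under_edge_deletion
    {V : Type*} [Fintype V]
    (E E' : V → V → Prop)
    (hacyclic : ∀ v : V, ¬ Relation.TransGen E v v)
    (hsub : ∀ a b, E' a b → E a b)
    (A B : V) (C : Set V)
    (hnoColliderInC : ∀ p, IsPath E A B p → ∀ m, IsColliderOn E p m →
      ∀ x, Relation.ReflTransGen E m x → x ∉ C)
    (hdsep : DSep E C A B) :
    DSep E' C A B :=
  dsep_preserved_under_edge_deletion_general E E' hacyclic hsub A B C hdsep
end

section
/- In a directed acyclic graph, if A and B are d-separated given C, and M is a vertex that is not a collider (and not a descendant of a collider) on any path between A and B, then A and B are d-separated given C ∪ {M}. -/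
/-! d-separation in directed acyclic graphs. -/

namespace DSepStmt10

variable {V : Type*}

/-- An undirected path in the directed graph with edge relation `E`: a list of pairwise
distinct vertices, consecutive ones adjacent in either orientation, from `A` to `B`. -/
def IsPath (E : V → V → Prop) (A B : V) (p : List V) : Prop :=
  p.Nodup ∧ p.Chain' (fun a b => E a b ∨ E b a) ∧ p.head? = some A ∧ p.getLast? = some B

/-- `m` is a collider on path `p`: an interior vertex whose two adjacent path edges both
point into it. -/
def IsColliderOn (E : V → V → Prop) (p : List V) (m : V) : Prop :=
  ∃ i a b, p[(i : ℕ)]? = some a ∧ p[i + 1]? = some m ∧ p[i + 2]? = some b ∧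
    E a m ∧ E b m

/-- The path `p` is blocked by the conditioning set `S`: some interior triple `(a, m, b)` of
consecutive vertices is such that either `m` is a non-collider in `S`, or `m` is a collider
such that neither `m` nor any of its descendants lies in `S`. -/
def Blocked (E : V → V → Prop) (S : Set V) (p : List V) : Prop :=
  ∃ i a m b, p[(i : ℕ)]? = some a ∧ p[i + 1]? = some m ∧ p[i + 2]? = some b ∧
    ((¬(E a m ∧ E b m)) ∧ m ∈ S ∨
      (E a m ∧ E b m) ∧ ∀ x, Relation.ReflTransGen E m x → x ∉ S)

/-- `A` and `B` are d-separated given `S`: every path between `A` and `B` is blocked by `S`. -/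
def DSep (E : V → V → Prop) (S : Set V) (A B : V) : Prop :=
  ∀ p, IsPath E A B p → Blocked E S p

theorem Blocked.union {E : V → V → Prop} {S T : Set V} {p : List V}
    (hS : Blocked E S p)
    (hT : ∀ m, IsColliderOn E p m → ∀ x, Relation.ReflTransGen E m x → x ∉ T) :
    Blocked E (S ∪ T) p := by
  obtain ⟨i, a, m, b, ha, hm, hb, ⟨hnc, hmS⟩ | ⟨hc, hdesc⟩⟩ := hS
  · exact ⟨i, a, m, b, ha, hm, hb, Or.inl ⟨hnc, Or.inl hmS⟩⟩
  · refine ⟨i, a, m, b, ha, hm, hb, Or.inr ⟨hc, fun x hx hxST => ?_⟩⟩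
    rcases hxST with hxS | hxT
    · exact hdesc x hx hxS
    · exact hT m ⟨i, a, b, ha, hm, hb, hc⟩ x hx hxT

end DSepStmt10

open DSepStmt10

theorem dsep_insert_noncollider_general
    {V : Type*}
    (E : V → V → Prop)
    (A B M : V) (C : Set V)
    (hdsep : DSep E C A B)
    (hM : ∀ p, IsPath E A B p → ∀ m, IsColliderOn E p m → ¬ Relation.ReflTransGen E m M) :
    DSep E (C ∪ {M}) A B := fun p hp =>
  (hdsep p hp).union fun m hm _ hx hxM => hM p hp m hm (Set.mem_singleton_iff.mp hxM ▸ hx)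

/-- In a finite DAG, if `A` and `B` are d-separated given `C`, and `M` is
neither a collider nor a descendant of a collider on any path between `A` and `B`, then
`A` and `B` are d-separated given `C ∪ {M}`. -/
theorem dsep_insert_noncollider
    {V : Type*} [Fintype V]
    (E : V → V → Prop)
    (hacyclic : ∀ v : V, ¬ Relation.TransGen E v v)
    (A B M : V) (C : Set V)
    (hdsep : DSep E C A B)
    (hM : ∀ p, IsPath E A B p → ∀ m, IsColliderOn E p m → ¬ Relation.ReflTransGen E m M) :
    DSep E (C ∪ {M}) A B :=
  dsep_insert_noncollider_general E A B M C hdsep hM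
end

section
/- In a DAG containing vertices Z₁, D, M, Y and conditioning set including X, suppose: (i) there is no open path between M and Z₁ given {D, X, Z₂} (implication TIbm), (ii) there is no open path between Y and Z₂ given {D, X, M} (implication TIc), and (iii) there is no open path between Y and Z₁ given {D, X, Z₂} (implication TIam). Then there is no open path between Y and Z₁ given {D, X, M} (implication TId), provided the structural exclusions of Assumption 1 hold (no directed edges Y→M, Y→X, Y→Z₁, Y→Z₂, M→D, M→X, M→Z₁, M→Z₂, Z₂→D, Z₂→X, Z₂→Z₁, D→X, D→Z₁). -/
/-!
Let `p` be a path from `Y` to `Z₁` that is open given `{D, X, M}`. It avoids `Z₂`, since its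
prefix ending at `Z₂` would be an open path contradicting (TIc). By (TIam) `p` is blocked given
`{D, X, Z₂}`; as it is open given `{D, X, M}` and avoids `Z₂`, a blocking triple can only be a
collider `W` with no descendant in `{D, X, Z₂}` but with `M` among its descendants. Take the last
such triple: the part of `p` after `W` is then open given `{D, X, Z₂}`. Following a directed path
from `W` down to `M` and prepending its vertices (or cutting the path short when one of them is
already on it) keeps it open, because those vertices are non-colliders outside `{D, X, Z₂}`.
This yields an open path from `M` to `Z₁` given `{D, X, Z₂}`, contradicting (TIbm).
-/

namespace DSepStmt17

variable {V : Type*}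

/-- An undirected path in the directed graph with edge relation `E`: a list of pairwise
distinct vertices, consecutive ones adjacent in either orientation, from `A` to `B`. -/
def IsPath (E : V → V → Prop) (A B : V) (p : List V) : Prop :=
  p.Nodup ∧ p.Chain' (fun a b => E a b ∨ E b a) ∧ p.head? = some A ∧ p.getLast? = some B

/-- The path `p` is blocked by the conditioning set `S`: some interior triple `(a, m, b)` of
consecutive vertices is such that either `m` is a non-collider in `S`, or `m` is a collider
such that neither `m` nor any of its descendants lies in `S`. -/
def Blocked (E : V → V → Prop) (S : Set V) (p : List V) : Prop :=
  ∃ i a m b, p[i]? = some a ∧ p[i + 1]? = some m ∧ p[i + 2]? = some b ∧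
    ((¬(E a m ∧ E b m)) ∧ m ∈ S ∨
      (E a m ∧ E b m) ∧ ∀ x, Relation.ReflTransGen E m x → x ∉ S)

/-- `A` and `B` are d-separated given `S`: every path between `A` and `B` is blocked by `S`. -/
def DSep (E : V → V → Prop) (S : Set V) (A B : V) : Prop :=
  ∀ p, IsPath E A B p → Blocked E S p

variable {E : V → V → Prop} {S S' : Set V} {A B : V} {p : List V}

def BlocksAt (E : V → V → Prop) (S : Set V) (p : List V) (i : ℕ) : Prop :=
  ∃ a m b, p[i]? = some a ∧ p[i + 1]? = some m ∧ p[i + 2]? = some b ∧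
    ((¬(E a m ∧ E b m)) ∧ m ∈ S ∨
      (E a m ∧ E b m) ∧ ∀ x, Relation.ReflTransGen E m x → x ∉ S)

theorem blocked_iff_exists_blocksAt : Blocked E S p ↔ ∃ i, BlocksAt E S p i := Iff.rfl

theorem BlocksAt.lt_length {i : ℕ} (h : BlocksAt E S p i) : i < p.length := by
  obtain ⟨a, -, -, ha, -⟩ := h
  exact (List.getElem?_eq_some_iff.mp ha).1

theorem blocksAt_drop (n j : ℕ) : BlocksAt E S (p.drop n) j ↔ BlocksAt E S p (n + j) := by
  simp only [BlocksAt, List.getElem?_drop, Nat.add_assoc]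

theorem BlocksAt.of_take {n i : ℕ} (h : BlocksAt E S (p.take n) i) : BlocksAt E S p i := by
  have hsub : ∀ {j : ℕ} {v : V}, (p.take n)[j]? = some v → p[j]? = some v := by
    intro j v hv
    rw [List.getElem?_take] at hv
    split_ifs at hv
    exact hv
  obtain ⟨a, m, b, ha, hm, hb, hcase⟩ := h
  exact ⟨a, m, b, hsub ha, hsub hm, hsub hb, hcase⟩

theorem blocksAt_cons_succ {c : V} {j : ℕ} : BlocksAt E S (c :: p) (j + 1) ↔ BlocksAt E S p j := by
  simp only [BlocksAt, List.getElem?_cons_succ, Nat.add_right_comm j 1]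

theorem Blocked.of_drop (n : ℕ) (h : Blocked E S (p.drop n)) : Blocked E S p := by
  obtain ⟨j, hj⟩ := blocked_iff_exists_blocksAt.mp h
  exact ⟨n + j, (blocksAt_drop n j).mp hj⟩

theorem Blocked.of_take (n : ℕ) (h : Blocked E S (p.take n)) : Blocked E S p := by
  obtain ⟨j, hj⟩ := blocked_iff_exists_blocksAt.mp h
  exact ⟨j, hj.of_take⟩

theorem Blocked.exists_blocksAt_not_blocked_drop (h : Blocked E S p) :
    ∃ i, BlocksAt E S p i ∧ ¬ Blocked E S (p.drop (i + 1)) := by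
  classical
  obtain ⟨i₀, hi₀⟩ := blocked_iff_exists_blocksAt.mp h
  refine ⟨Nat.findGreatest (BlocksAt E S p) p.length,
    Nat.findGreatest_spec hi₀.lt_length.le hi₀, ?_⟩
  intro hrest
  obtain ⟨j, hj⟩ := blocked_iff_exists_blocksAt.mp hrest
  rw [blocksAt_drop] at hj
  exact Nat.findGreatest_is_greatest (by omega) hj.lt_length.le hj

theorem IsPath.drop (h : IsPath E A B p) {n : ℕ} {u : V} (hn : p[n]? = some u) :
    IsPath E u B (p.drop n) := by
  obtain ⟨hnd, hch, -, hlast⟩ := h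
  have hlt := (List.getElem?_eq_some_iff.mp hn).1
  refine ⟨(List.drop_sublist n p).nodup hnd, hch.drop n, ?_, ?_⟩
  · rwa [List.head?_drop]
  · rwa [List.getLast?_drop, if_neg (by omega)]

theorem IsPath.take (h : IsPath E A B p) {n : ℕ} {c : V} (hn : p[n]? = some c) :
    IsPath E A c (p.take (n + 1)) := by
  obtain ⟨hnd, hch, hhead, -⟩ := h
  have hlt := (List.getElem?_eq_some_iff.mp hn).1
  refine ⟨(List.take_sublist _ _).nodup hnd, hch.take _, ?_, ?_⟩
  · rwa [List.head?_take, if_neg (by omega)]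
  · rw [List.getLast?_take, if_neg (by omega), Nat.add_sub_cancel, hn, Option.some_or]

theorem IsPath.cons {c b : V} (h : IsPath E b B p) (hc : c ∉ p) (hbc : E b c) :
    IsPath E c B (c :: p) := by
  obtain ⟨hnd, hch, hhead, hlast⟩ := h
  cases p with
  | nil => simp at hhead
  | cons b' p' =>
    obtain rfl : b' = b := by simpa using hhead
    exact ⟨List.nodup_cons.mpr ⟨hc, hnd⟩, List.isChain_cons_cons.mpr ⟨Or.inr hbc, hch⟩, rfl,
      by rwa [List.getLast?_cons_cons]⟩

theorem not_blocked_cons {c b : V} (h : ¬ Blocked E S p) (hhead : p.head? = some b)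
    (hbS : b ∉ S) (hcb : ¬ E c b) : ¬ Blocked E S (c :: p) := by
  intro hcp
  obtain ⟨_ | j, hj⟩ := blocked_iff_exists_blocksAt.mp hcp
  · obtain ⟨a, m, n, ha, hm, -, hcase⟩ := hj
    obtain rfl : a = c := by simpa using ha.symm
    obtain rfl : m = b := by
      simpa [← List.head?_eq_getElem?, hhead] using hm.symm
    rcases hcase with ⟨-, hbS'⟩ | ⟨⟨hcb', -⟩, -⟩
    · exact hbS hbS'
    · exact hcb hcb'
  · exact h ⟨j, blocksAt_cons_succ.mp hj⟩

theorem exists_open_path_of_reflTransGen (hasymm : ∀ a b, E a b → ¬ E b a) {w v : V}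
    (hw : ∀ u, Relation.ReflTransGen E w u → u ∉ S) (hp : IsPath E w B p)
    (hopen : ¬ Blocked E S p) (hwv : Relation.ReflTransGen E w v) :
    ∃ q, IsPath E v B q ∧ ¬ Blocked E S q := by
  induction hwv with
  | refl => exact ⟨p, hp, hopen⟩
  | @tail b c hwb hbc ih =>
    obtain ⟨q, hq, hqopen⟩ := ih
    by_cases hcq : c ∈ q
    · obtain ⟨n, hn⟩ := List.getElem?_of_mem hcq
      exact ⟨q.drop n, hq.drop hn, fun h => hqopen (h.of_drop n)⟩
    · exact ⟨c :: q, hq.cons hcq hbc,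
        not_blocked_cons hqopen hq.2.2.1 (hw b hwb) (hasymm b c hbc)⟩

theorem notMem_of_dSep {c : V} (hp : IsPath E A B p) (hopen : ¬ Blocked E S p)
    (hsep : DSep E S A c) : c ∉ p := by
  intro hc
  obtain ⟨n, hn⟩ := List.getElem?_of_mem hc
  exact hopen ((hsep _ (hp.take hn)).of_take (n + 1))

theorem BlocksAt.exists_collider_of_not_blocksAt {i : ℕ} (h : BlocksAt E S' p i)
    (h' : ¬ BlocksAt E S p i) (hS : ∀ v ∈ p, v ∈ S' → v ∈ S) :
    ∃ w, p[i + 1]? = some w ∧ (∀ u, Relation.ReflTransGen E w u → u ∉ S') ∧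
      ∃ u, Relation.ReflTransGen E w u ∧ u ∈ S := by
  obtain ⟨a, w, b, ha, hw, hb, hcase⟩ := h
  have hwp : w ∈ p := List.mem_of_getElem? hw
  rcases hcase with ⟨hnc, hwS'⟩ | ⟨hcoll, hdesc⟩
  · exact absurd ⟨a, w, b, ha, hw, hb, Or.inl ⟨hnc, hS w hwp hwS'⟩⟩ h'
  · refine ⟨w, hw, hdesc, ?_⟩
    by_contra! hno
    exact h' ⟨a, w, b, ha, hw, hb, Or.inr ⟨hcoll, hno⟩⟩

end DSepStmt17

open DSepStmt17

theorem TId_of_TIam_TIbm_TIc_general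
    {V : Type*}
    (E : V → V → Prop)
    (y d m x z₁ z₂ : V)
    (hacyclic : ∀ v : V, ¬ Relation.TransGen E v v)
    -- testable implications:
    (hTIbm : DSep E {d, x, z₂} m z₁)
    (hTIc : DSep E {d, x, m} y z₂)
    (hTIam : DSep E {d, x, z₂} y z₁) :
    DSep E {d, x, m} y z₁ := by
  intro p hp
  by_contra hopen
  have hz₂ : z₂ ∉ p := notMem_of_dSep hp hopen hTIc
  obtain ⟨i, hi, hrest⟩ := (hTIam p hp).exists_blocksAt_not_blocked_drop
  obtain ⟨w, hw, hwS', u, hwu, huS⟩ := hi.exists_collider_of_not_blocksAt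
    (fun h => hopen ⟨i, h⟩) (by rintro v hv (rfl | rfl | rfl) <;> simp_all)
  obtain rfl : u = m := by
    have := hwS' u hwu
    simp only [Set.mem_insert_iff, Set.mem_singleton_iff] at this huS
    tauto
  have hasymm : ∀ a b, E a b → ¬ E b a := fun a b hab hba =>
    hacyclic a (.tail (.single hab) hba)
  obtain ⟨q, hq, hqopen⟩ :=
    exists_open_path_of_reflTransGen hasymm hwS' (hp.drop hw) hrest hwu
  exact hqopen (hTIbm q hq)

/-- Lemma 1(a) of the paper: under the structural exclusions of Assumption 1,
if (TIbm) M ⊥ Z₁ | {D, X, Z₂}, (TIc) Y ⊥ Z₂ | {D, X, M}, and (TIam) Y ⊥ Z₁ | {D, X, Z₂}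
hold as d-separations, then (TId) Y ⊥ Z₁ | {D, X, M} holds. -/
theorem TId_of_TIam_TIbm_TIc
    {V : Type*} [Fintype V]
    (E : V → V → Prop)
    (y d m x z₁ z₂ : V)
    (hdistinct : List.Nodup [y, d, m, x, z₁, z₂])
    (hacyclic : ∀ v : V, ¬ Relation.TransGen E v v)
    -- structural exclusions of Assumption 1:
    (h1 : ¬ E y m) (h2 : ¬ E y x) (h3 : ¬ E y z₁) (h4 : ¬ E y z₂)
    (h5 : ¬ E m d) (h6 : ¬ E m x) (h7 : ¬ E m z₁) (h8 : ¬ E m z₂)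
    (h9 : ¬ E z₂ d) (h10 : ¬ E z₂ x) (h11 : ¬ E z₂ z₁)
    (h12 : ¬ E d x) (h13 : ¬ E d z₁)
    -- testable implications:
    (hTIbm : DSep E {d, x, z₂} m z₁)
    (hTIc : DSep E {d, x, m} y z₂)
    (hTIam : DSep E {d, x, z₂} y z₁) :
    DSep E {d, x, m} y z₁ :=
  TId_of_TIam_TIbm_TIc_general E y d m x z₁ z₂ hacyclic hTIbm hTIc hTIam
end
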